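/- For every prime number p, taking L to be an algebraic closure of 𝔽_p, the vector v = (XY, X+Y, 1, 1) ∈ V₈ satisfies Δ₈(v) = 1 and is stable for the action of G₈ = SL₂(L)×Lˣ×Lˣ×Lˣ; in particular, for every prime p there exist stable vectors in V₈ all of whose coordinates lie in the prime subfield 𝔽_p. -/
import Mathlib


/- Zariski-closedness of a subset of affine n-space over L: it is the common zero locus
of a set of polynomial functions (with respect to the fixed coordinates). -/
def IsZariskiClosed {n : ℕ} {L : Type*} [CommRing L] (s : Set (Fin n → L)) : Prop :=
  ∃ P : Set (MvPolynomial (Fin n) L), s = {x | ∀ p ∈ P, MvPolynomial.eval x p = 0}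

/- The element (F₁, F₂, f, g) of V₈ = P₂ ⊕ P₁ ⊕ L ⊕ L with coordinates
c = (a,b,c,d,e,f,g): F₁ = aX² + bXY + cY², F₂ = dX + eY (X = X 0, Y = X 1). -/
noncomputable def toV8 {L : Type*} [CommRing L] (c : Fin 7 → L) :
    MvPolynomial (Fin 2) L × MvPolynomial (Fin 2) L × L × L :=
  (MvPolynomial.C (c 0) * MvPolynomial.X 0 ^ 2
      + MvPolynomial.C (c 1) * MvPolynomial.X 0 * MvPolynomial.X 1
      + MvPolynomial.C (c 2) * MvPolynomial.X 1 ^ 2,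
   MvPolynomial.C (c 3) * MvPolynomial.X 0 + MvPolynomial.C (c 4) * MvPolynomial.X 1,
   c 5, c 6)

/- Linear substitution of the variables (X,Y) by a matrix A ∈ SL₂(L). -/
noncomputable def sub8 {L : Type*} [CommRing L] (A : Matrix.SpecialLinearGroup (Fin 2) L)
    (v : MvPolynomial (Fin 2) L) : MvPolynomial (Fin 2) L :=
  MvPolynomial.aeval (fun i => ∑ j : Fin 2, MvPolynomial.C (A.1 i j) * MvPolynomial.X j) v

/- The action of G₈ = SL₂(L) × Lˣ × Lˣ × Lˣ on V₈:
(A, t₁, t₂, t₃)·(F₁, F₂, f, g) = (t₂⁻¹·(F₁∘A), t₃⁻¹·(F₂∘A), t₁⁻¹·f, t₁²t₂³t₃²·g). -/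
noncomputable def act8 {L : Type*} [Field L]
    (g : Matrix.SpecialLinearGroup (Fin 2) L × Lˣ × Lˣ × Lˣ)
    (v : MvPolynomial (Fin 2) L × MvPolynomial (Fin 2) L × L × L) :
    MvPolynomial (Fin 2) L × MvPolynomial (Fin 2) L × L × L :=
  (((g.2.2.1 : L))⁻¹ • sub8 g.1 v.1,
   ((g.2.2.2 : L))⁻¹ • sub8 g.1 v.2.1,
   ((g.2.1 : L))⁻¹ * v.2.2.1,
   (g.2.1 : L) ^ 2 * (g.2.2.1 : L) ^ 3 * (g.2.2.2 : L) ^ 2 * v.2.2.2)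

/- Δ₈(v) = (f²g(b²−4ac)(cd²−bde+ae²))² = f⁴g²·disc(F₁)·disc(F₁F₂). -/
def Delta8 {L : Type*} [CommRing L] (c : Fin 7 → L) : L :=
  ((c 5) ^ 2 * c 6 * ((c 1) ^ 2 - 4 * c 0 * c 2)
      * (c 2 * (c 3) ^ 2 - c 1 * c 3 * c 4 + c 0 * (c 4) ^ 2)) ^ 2

/- Stability: the orbit of v (in the coordinate space of V₈ with respect to its
monomial basis) is Zariski-closed and the stabilizer of v in G₈ is finite. -/
def Stable8 {L : Type*} [Field L] (c : Fin 7 → L) : Prop :=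
  IsZariskiClosed {c' : Fin 7 → L |
    ∃ g : Matrix.SpecialLinearGroup (Fin 2) L × Lˣ × Lˣ × Lˣ,
      toV8 c' = act8 g (toV8 c)} ∧
  {g : Matrix.SpecialLinearGroup (Fin 2) L × Lˣ × Lˣ × Lˣ |
      act8 g (toV8 c) = toV8 c}.Finite

-- key computation lemma
theorem act8_toV8 {L : Type*} [Field L]
    (g : Matrix.SpecialLinearGroup (Fin 2) L × Lˣ × Lˣ × Lˣ) (c : Fin 7 → L) :
    act8 g (toV8 c) = toV8
      ![((g.2.2.1 : L))⁻¹ * (c 0 * (g.1.1 0 0)^2 + c 1 * g.1.1 0 0 * g.1.1 1 0 + c 2 * (g.1.1 1 0)^2),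
        ((g.2.2.1 : L))⁻¹ * (2 * c 0 * g.1.1 0 0 * g.1.1 0 1
            + c 1 * (g.1.1 0 0 * g.1.1 1 1 + g.1.1 0 1 * g.1.1 1 0)
            + 2 * c 2 * g.1.1 1 0 * g.1.1 1 1),
        ((g.2.2.1 : L))⁻¹ * (c 0 * (g.1.1 0 1)^2 + c 1 * g.1.1 0 1 * g.1.1 1 1 + c 2 * (g.1.1 1 1)^2),
        ((g.2.2.2 : L))⁻¹ * (c 3 * g.1.1 0 0 + c 4 * g.1.1 1 0),
        ((g.2.2.2 : L))⁻¹ * (c 3 * g.1.1 0 1 + c 4 * g.1.1 1 1),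
        ((g.2.1 : L))⁻¹ * c 5,
        (g.2.1 : L) ^ 2 * (g.2.2.1 : L) ^ 3 * (g.2.2.2 : L) ^ 2 * c 6] := by
  obtain ⟨A, t1, t2, t3⟩ := g
  simp only [act8, toV8, sub8, Matrix.cons_val_zero, Matrix.cons_val_one, Matrix.head_cons,
    Matrix.cons_val_two, Matrix.tail_cons, Matrix.cons_val_three, Matrix.cons_val_four,
    map_add, map_mul, map_pow, MvPolynomial.aeval_C, MvPolynomial.aeval_X,
    Fin.sum_univ_two, MvPolynomial.smul_eq_C_mul]
  refine Prod.ext ?_ (Prod.ext ?_ rfl)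
  · simp only [map_mul, map_add, map_pow, map_inv₀, map_ofNat, MvPolynomial.algebraMap_eq]
    ring
  · simp only [map_mul, map_add, map_inv₀, MvPolynomial.algebraMap_eq]
    ring

theorem toV8_inj {L : Type*} [CommRing L] {c c' : Fin 7 → L} (h : toV8 c = toV8 c') : c = c' := by
  have h1 := congrArg Prod.fst h
  have h2 := congrArg (fun x => x.2.1) h
  have h3 : c 5 = c' 5 := congrArg (fun x => x.2.2.1) h
  have h4 : c 6 = c' 6 := congrArg (fun x => x.2.2.2) h
  simp only [toV8] at h1 h2
  have e1 := congrArg (MvPolynomial.eval ![(1:L),0]) h1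
  have e2 := congrArg (MvPolynomial.eval ![(0:L),1]) h1
  have e3 := congrArg (MvPolynomial.eval ![(1:L),1]) h1
  have f1 := congrArg (MvPolynomial.eval ![(1:L),0]) h2
  have f2 := congrArg (MvPolynomial.eval ![(0:L),1]) h2
  simp only [map_add, map_mul, map_pow, MvPolynomial.eval_C, MvPolynomial.eval_X,
    Matrix.cons_val_zero, Matrix.cons_val_one, Matrix.head_cons, one_pow, mul_one,
    mul_zero, zero_pow, add_zero, zero_add, ne_eq, OfNat.ofNat_ne_zero,
    not_false_iff] at e1 e2 e3 f1 f2
  funext i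
  fin_cases i <;> simp_all

theorem orbit_fwd {L : Type*} [Field L] {c' : Fin 7 → L}
    (h : ∃ g : Matrix.SpecialLinearGroup (Fin 2) L × Lˣ × Lˣ × Lˣ,
      toV8 c' = act8 g (toV8 (![0,1,0,1,1,1,1] : Fin 7 → L))) :
    (c' 5)^2 * c' 6 * ((c' 1)^2 - 4 * c' 0 * c' 2)
      * (c' 2 * (c' 3)^2 - c' 1 * c' 3 * c' 4 + c' 0 * (c' 4)^2) = -1 := by
  obtain ⟨⟨A, t1, t2, t3⟩, hEq⟩ := h
  rw [act8_toV8] at hEq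
  have hc := toV8_inj hEq
  have hdet : A.1 0 0 * A.1 1 1 - A.1 0 1 * A.1 1 0 = 1 := by
    have := A.2
    rwa [Matrix.det_fin_two] at this
  have h0 : c' 0 = (t2:L)⁻¹ * ((0:L) * (A.1 0 0)^2 + 1 * (A.1 0 0) * (A.1 1 0) + 0 * (A.1 1 0)^2) := congrFun hc 0
  have h1 : c' 1 = (t2:L)⁻¹ * (2 * (0:L) * (A.1 0 0) * (A.1 0 1) + 1 * ((A.1 0 0) * (A.1 1 1) + (A.1 0 1) * (A.1 1 0)) + 2 * 0 * (A.1 1 0) * (A.1 1 1)) := congrFun hc 1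
  have h2 : c' 2 = (t2:L)⁻¹ * ((0:L) * (A.1 0 1)^2 + 1 * (A.1 0 1) * (A.1 1 1) + 0 * (A.1 1 1)^2) := congrFun hc 2
  have h3 : c' 3 = (t3:L)⁻¹ * ((1:L) * (A.1 0 0) + 1 * (A.1 1 0)) := congrFun hc 3
  have h4 : c' 4 = (t3:L)⁻¹ * ((1:L) * (A.1 0 1) + 1 * (A.1 1 1)) := congrFun hc 4
  have h5 : c' 5 = (t1:L)⁻¹ * 1 := congrFun hc 5
  have h6 : c' 6 = (t1:L) ^ 2 * (t2:L) ^ 3 * (t3:L) ^ 2 * 1 := congrFun hc 6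
  have ht1 : (t1 : L) ≠ 0 := t1.ne_zero
  have ht2 : (t2 : L) ≠ 0 := t2.ne_zero
  have ht3 : (t3 : L) ≠ 0 := t3.ne_zero
  rw [h0, h1, h2, h3, h4, h5, h6]
  have key : ∀ x : L, x = 1 → ((t1:L)⁻¹*1)^2 * ((t1:L)^2*(t2:L)^3*(t3:L)^2*1)
      * (((t2:L)⁻¹ * (2 * (0:L) * (A.1 0 0) * (A.1 0 1) + 1 * ((A.1 0 0) * (A.1 1 1) + (A.1 0 1) * (A.1 1 0)) + 2 * 0 * (A.1 1 0) * (A.1 1 1)))^2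
          - 4*((t2:L)⁻¹ * ((0:L) * (A.1 0 0)^2 + 1 * (A.1 0 0) * (A.1 1 0) + 0 * (A.1 1 0)^2))*((t2:L)⁻¹ * ((0:L) * (A.1 0 1)^2 + 1 * (A.1 0 1) * (A.1 1 1) + 0 * (A.1 1 1)^2)))
      * (((t2:L)⁻¹ * ((0:L) * (A.1 0 1)^2 + 1 * (A.1 0 1) * (A.1 1 1) + 0 * (A.1 1 1)^2))*((t3:L)⁻¹ * ((1:L) * (A.1 0 0) + 1 * (A.1 1 0)))^2
          - ((t2:L)⁻¹ * (2 * (0:L) * (A.1 0 0) * (A.1 0 1) + 1 * ((A.1 0 0) * (A.1 1 1) + (A.1 0 1) * (A.1 1 0)) + 2 * 0 * (A.1 1 0) * (A.1 1 1)))*((t3:L)⁻¹ * ((1:L) * (A.1 0 0) + 1 * (A.1 1 0)))*((t3:L)⁻¹ * ((1:L) * (A.1 0 1) + 1 * (A.1 1 1)))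
          + ((t2:L)⁻¹ * ((0:L) * (A.1 0 0)^2 + 1 * (A.1 0 0) * (A.1 1 0) + 0 * (A.1 1 0)^2))*((t3:L)⁻¹ * ((1:L) * (A.1 0 1) + 1 * (A.1 1 1)))^2)
      = -x^4 := by
    intro x hx
    rw [← hdet] at hx
    rw [hx]
    field_simp
    ring
  have := key 1 rfl
  rw [this]
  norm_num

theorem mk_orbit {L : Type*} [Field L] {c' : Fin 7 → L} (α β γ δ S1 S2 T3 : L)
    (hS1 : S1 ≠ 0) (hS2 : S2 ≠ 0) (hT3 : T3 ≠ 0)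
    (hdet : α * δ - β * γ = 1)
    (e0 : c' 0 = S2 * (α * γ))
    (e1 : c' 1 = S2 * (α * δ + β * γ))
    (e2 : c' 2 = S2 * (β * δ))
    (e3 : T3 * c' 3 = α + γ)
    (e4 : T3 * c' 4 = β + δ)
    (e5 : c' 5 = S1)
    (e6 : c' 6 * S1 ^ 2 * S2 ^ 3 = T3 ^ 2) :
    ∃ g : Matrix.SpecialLinearGroup (Fin 2) L × Lˣ × Lˣ × Lˣ,
      toV8 c' = act8 g (toV8 (![0,1,0,1,1,1,1] : Fin 7 → L)) := by
  refine ⟨⟨⟨!![α, β; γ, δ], by rw [Matrix.det_fin_two_of]; linear_combination hdet⟩,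
    Units.mk0 S1⁻¹ (inv_ne_zero hS1), Units.mk0 S2⁻¹ (inv_ne_zero hS2),
    Units.mk0 T3 hT3⟩, ?_⟩
  rw [act8_toV8]
  apply congrArg toV8
  have E0 : c' 0 = (S2⁻¹)⁻¹ * ((0:L) * α^2 + 1 * α * γ + 0 * γ^2) := by
    rw [inv_inv]; linear_combination e0
  have E1 : c' 1 = (S2⁻¹)⁻¹ * (2 * (0:L) * α * β + 1 * (α * δ + β * γ) + 2 * 0 * γ * δ) := by
    rw [inv_inv]; linear_combination e1
  have E2 : c' 2 = (S2⁻¹)⁻¹ * ((0:L) * β^2 + 1 * β * δ + 0 * δ^2) := by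
    rw [inv_inv]; linear_combination e2
  have E3 : c' 3 = (T3)⁻¹ * ((1:L) * α + 1 * γ) := by
    rw [eq_inv_mul_iff_mul_eq₀ hT3]; linear_combination e3
  have E4 : c' 4 = (T3)⁻¹ * ((1:L) * β + 1 * δ) := by
    rw [eq_inv_mul_iff_mul_eq₀ hT3]; linear_combination e4
  have E5 : c' 5 = (S1⁻¹)⁻¹ * 1 := by rw [inv_inv, mul_one]; exact e5
  have E6 : c' 6 = (S1⁻¹) ^ 2 * (S2⁻¹) ^ 3 * T3 ^ 2 * 1 := by
    field_simp
    linear_combination e6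
  funext i
  fin_cases i
  exacts [E0, E1, E2, E3, E4, E5, E6]

theorem orbit_bwd {L : Type*} [Field L] [IsAlgClosed L] {c' : Fin 7 → L}
    (h : (c' 5)^2 * c' 6 * ((c' 1)^2 - 4 * c' 0 * c' 2)
      * (c' 2 * (c' 3)^2 - c' 1 * c' 3 * c' 4 + c' 0 * (c' 4)^2) = -1) :
    ∃ g : Matrix.SpecialLinearGroup (Fin 2) L × Lˣ × Lˣ × Lˣ,
      toV8 c' = act8 g (toV8 (![0,1,0,1,1,1,1] : Fin 7 → L)) := by
  set a := c' 0 with ha'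
  set b := c' 1 with hb'
  set c := c' 2 with hc'
  set d := c' 3 with hd'
  set e := c' 4 with he'
  set f := c' 5 with hf'
  set g := c' 6 with hg'
  have hf : f ≠ 0 := by intro h0; rw [h0] at h; simp at h
  have hg : g ≠ 0 := by intro h0; rw [h0] at h; simp at h
  have hD1 : b^2 - 4*a*c ≠ 0 := by
    intro h0; rw [h0] at h; simp at h
  have hD2 : c*d^2 - b*d*e + a*e^2 ≠ 0 := by
    intro h0; rw [h0] at h; simp at h
  rcases eq_or_ne a 0 with ha0 | ha
  · -- case a = 0
    have hb : b ≠ 0 := by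
      intro hb0; apply hD1; rw [hb0, ha0]; ring
    obtain ⟨ω, hω⟩ := IsAlgClosed.exists_pow_nat_eq
      (k := L) ((b*(c*d^2 - b*d*e + a*e^2))⁻¹) two_pos
    have hω2 : ω^2 * (b*(c*d^2 - b*d*e + a*e^2)) = 1 := by
      rw [hω]; exact inv_mul_cancel₀ (mul_ne_zero hb hD2)
    have hωz : ω ≠ 0 := by
      intro h0; rw [h0] at hω2; simp at hω2
    refine mk_orbit 0 (ω*(b*e - c*d)) (ω*d*b) (ω*d*c) f (-b) (ω*b)
      hf (neg_ne_zero.mpr hb) (mul_ne_zero hωz hb) ?_ ?_ ?_ ?_ ?_ ?_ rfl ?_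
    · linear_combination hω2 - (ω^2*b*e^2)*ha0
    · linear_combination ha0
    · linear_combination (-b)*hω2 + (ω^2*b^2*e^2)*ha0
    · linear_combination (-c)*hω2 + (c*ω^2*b*e^2)*ha0
    · ring
    · ring
    · apply mul_right_cancel₀ (mul_ne_zero hb hD2)
      linear_combination (-(b^2))*h + (-(b^2))*hω2
        + (-(4*b^2*c*f^2*g*(c*d^2-b*d*e+a*e^2)))*ha0
  · -- case a ≠ 0
    obtain ⟨r, hr0⟩ := IsAlgClosed.exists_root
      (Polynomial.C a * Polynomial.X^2 + Polynomial.C b * Polynomial.X + Polynomial.C c)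
      (by rw [Polynomial.degree_quadratic ha]; exact two_ne_zero)
    have hr : a*r^2 + b*r + c = 0 := by
      have := hr0
      simp only [Polynomial.IsRoot.def, Polynomial.eval_add, Polynomial.eval_mul,
        Polynomial.eval_pow, Polynomial.eval_C, Polynomial.eval_X] at this
      linear_combination this
    set s := -(b/a) - r with hs
    have has : a * s = -b - a*r := by rw [hs]; field_simp
    have hD1eq : a^2*(s-r)^2 = b^2 - 4*a*c := by
      linear_combination (a*s - b - 3*a*r)*has + (4*a)*hr
    have hsr : s - r ≠ 0 := by
      intro h0; apply hD1; rw [← hD1eq, h0]; ring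
    have hD2rel : a*((e+r*d)*(e+s*d)) = c*d^2 - b*d*e + a*e^2 := by
      linear_combination (d*e + r*d^2)*has + (-(d^2))*hr
    obtain ⟨ν, hν⟩ := IsAlgClosed.exists_pow_nat_eq
      (k := L) (a / ((c*d^2 - b*d*e + a*e^2)*(s-r))) two_pos
    have hν2 : ν^2 * ((c*d^2 - b*d*e + a*e^2)*(s-r)) = a := by
      rw [hν]; exact div_mul_cancel₀ a (mul_ne_zero hD2 hsr)
    have hνz : ν ≠ 0 := by
      intro h0; rw [h0] at hν2; simp at hν2; exact ha hν2.symm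
    have hunit : ν^2 * ((e+r*d)*(e+s*d)) * (s-r) = 1 := by
      apply mul_left_cancel₀ ha
      rw [mul_one]
      linear_combination (ν^2*(s-r))*hD2rel + hν2
    have hrs : r - s ≠ 0 := fun h0 => hsr (by linear_combination -h0)
    refine mk_orbit (ν*(e+s*d)) (-(r*(ν*(e+s*d)))) (-(ν*(e+r*d))) (s*(ν*(e+r*d)))
      f (a*(r-s)) (ν*(s-r)) hf (mul_ne_zero ha hrs) (mul_ne_zero hνz hsr)
      ?_ ?_ ?_ ?_ ?_ ?_ rfl ?_
    · linear_combination hunit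
    · linear_combination (-a)*hunit
    · linear_combination has + (a*(r+s))*hunit
    · linear_combination (-(a*r*s))*hunit + (-r)*has + hr
    · ring
    · ring
    · apply mul_right_cancel₀ (mul_ne_zero hD1 hD2)
      linear_combination (a^3*(r-s)^3)*h + (-((s-r)*(b^2-4*a*c)))*hν2 + (a*(s-r))*hD1eq

theorem stab_finite {L : Type*} [Field L] :
    {g : Matrix.SpecialLinearGroup (Fin 2) L × Lˣ × Lˣ × Lˣ |
      act8 g (toV8 (![0,1,0,1,1,1,1] : Fin 7 → L)) = toV8 (![0,1,0,1,1,1,1] : Fin 7 → L)}.Finite := by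
  classical
  set ψ : Matrix.SpecialLinearGroup (Fin 2) L × Lˣ × Lˣ × Lˣ →
      Matrix (Fin 2) (Fin 2) L × L × L × L :=
    fun g => (g.1.1, (g.2.1 : L), (g.2.2.1 : L), (g.2.2.2 : L)) with hψ
  have ψinj : Function.Injective ψ := by
    rintro ⟨A, t1, t2, t3⟩ ⟨A', t1', t2', t3'⟩ hEq
    simp only [hψ, Prod.mk.injEq] at hEq
    obtain ⟨e1, e2, e3, e4⟩ := hEq
    exact Prod.ext (Subtype.ext e1) (Prod.ext (Units.ext e2) (Prod.ext (Units.ext e3) (Units.ext e4)))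
  have hfin1 : {x : L | x^2 = 1}.Finite := by
    have hne : (Polynomial.X^2 - Polynomial.C 1 : Polynomial L) ≠ 0 :=
      Polynomial.X_pow_sub_C_ne_zero two_pos 1
    have := Polynomial.finite_setOf_isRoot hne
    convert this using 1
    ext x
    simp [Polynomial.IsRoot, sub_eq_zero]
  have hfin2 : {x : L | x^2 = -1}.Finite := by
    have hne : (Polynomial.X^2 - Polynomial.C (-1) : Polynomial L) ≠ 0 :=
      Polynomial.X_pow_sub_C_ne_zero two_pos (-1)
    have := Polynomial.finite_setOf_isRoot hne
    convert this using 1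
    ext x
    simp [Polynomial.IsRoot, sub_eq_zero, eq_neg_iff_add_eq_zero]
  apply Set.Finite.of_finite_image (f := ψ) _ ψinj.injOn
  apply Set.Finite.subset
    (Set.Finite.union
      (Set.Finite.image (fun x : L => ((!![x,0;0,x] : Matrix (Fin 2) (Fin 2) L), (1:L), (1:L), x)) hfin1)
      (Set.Finite.image (fun x : L => ((!![0,x;x,0] : Matrix (Fin 2) (Fin 2) L), (1:L), (-1:L), x)) hfin2))
  rintro _ ⟨⟨A, t1, t2, t3⟩, hg, rfl⟩
  simp only [Set.mem_setOf_eq] at hg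
  rw [act8_toV8] at hg
  have hc := toV8_inj hg
  have hdet : A.1 0 0 * A.1 1 1 - A.1 0 1 * A.1 1 0 = 1 := by
    have := A.2; rwa [Matrix.det_fin_two] at this
  have h0 : (t2:L)⁻¹ * ((0:L) * (A.1 0 0)^2 + 1 * (A.1 0 0) * (A.1 1 0) + 0 * (A.1 1 0)^2) = 0 := congrFun hc 0
  have h1 : (t2:L)⁻¹ * (2 * (0:L) * (A.1 0 0) * (A.1 0 1) + 1 * ((A.1 0 0) * (A.1 1 1) + (A.1 0 1) * (A.1 1 0)) + 2 * 0 * (A.1 1 0) * (A.1 1 1)) = 1 := congrFun hc 1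
  have h2 : (t2:L)⁻¹ * ((0:L) * (A.1 0 1)^2 + 1 * (A.1 0 1) * (A.1 1 1) + 0 * (A.1 1 1)^2) = 0 := congrFun hc 2
  have h3 : (t3:L)⁻¹ * ((1:L) * (A.1 0 0) + 1 * (A.1 1 0)) = 1 := congrFun hc 3
  have h4 : (t3:L)⁻¹ * ((1:L) * (A.1 0 1) + 1 * (A.1 1 1)) = 1 := congrFun hc 4
  have h5 : (t1:L)⁻¹ * 1 = 1 := congrFun hc 5
  have ht1 : (t1:L) ≠ 0 := t1.ne_zero
  have ht2 : (t2:L) ≠ 0 := t2.ne_zero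
  have ht3 : (t3:L) ≠ 0 := t3.ne_zero
  have ht1v : (t1 : L) = 1 := by
    rw [mul_one, inv_eq_one] at h5; exact h5
  have hαγ : A.1 0 0 * A.1 1 0 = 0 := by
    rcases mul_eq_zero.mp h0 with h | h
    · exact absurd h (inv_ne_zero ht2)
    · linear_combination h
  have hβδ : A.1 0 1 * A.1 1 1 = 0 := by
    rcases mul_eq_zero.mp h2 with h | h
    · exact absurd h (inv_ne_zero ht2)
    · linear_combination h
  rw [inv_mul_eq_one₀ ht2] at h1
  rw [inv_mul_eq_one₀ ht3] at h3
  rw [inv_mul_eq_one₀ ht3] at h4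
  have hb : A.1 0 0 * A.1 1 1 + A.1 0 1 * A.1 1 0 = (t2:L) := by linear_combination -h1
  have hd3 : A.1 0 0 + A.1 1 0 = (t3:L) := by linear_combination -h3
  have hd4 : A.1 0 1 + A.1 1 1 = (t3:L) := by linear_combination -h4
  rcases mul_eq_zero.mp hαγ with hα | hγ
  · -- α = 0 : antidiagonal case
    have hβ : A.1 0 1 ≠ 0 := by
      intro h0'; rw [hα, h0'] at hdet; simp at hdet
    have hδ : A.1 1 1 = 0 := by
      rcases mul_eq_zero.mp hβδ with h | h
      · exact absurd h hβ
      · exact h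
    have hγβ : A.1 1 0 = A.1 0 1 := by
      rw [hα, zero_add] at hd3; rw [hδ, add_zero] at hd4; rw [hd3, hd4]
    have hsq : (A.1 0 1)^2 = -1 := by
      have : -(A.1 0 1 * A.1 1 0) = 1 := by linear_combination hdet - (A.1 1 1)*hα
      rw [hγβ] at this; linear_combination -this
    refine Or.inr ⟨A.1 0 1, hsq, ?_⟩
    have ht2v : (t2 : L) = -1 := by
      rw [← hb, hα, hδ]; rw [hγβ]; linear_combination hsq
    have ht3v : (t3 : L) = A.1 0 1 := by rw [← hd4, hδ, add_zero]
    refine Prod.ext ?_ (Prod.ext ?_ (Prod.ext ?_ ?_)) <;>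
      simp only [hψ]
    · funext i j
      fin_cases i <;> fin_cases j
      · exact hα.symm
      · rfl
      · exact hγβ.symm
      · exact hδ.symm
    · exact ht1v.symm
    · exact ht2v.symm
    · exact ht3v.symm
  · -- γ = 0 : diagonal case
    have hδ : A.1 1 1 ≠ 0 := by
      intro h0'; rw [hγ, h0'] at hdet; simp at hdet
    have hβ : A.1 0 1 = 0 := by
      rcases mul_eq_zero.mp hβδ with h | h
      · exact h
      · exact absurd h hδ
    have hαδ' : A.1 0 0 = A.1 1 1 := by
      rw [hγ, add_zero] at hd3; rw [hβ, zero_add] at hd4; rw [hd3, hd4]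
    have hsq : (A.1 1 1)^2 = 1 := by
      have : A.1 0 0 * A.1 1 1 = 1 := by linear_combination hdet + (A.1 0 1)*hγ
      rw [hαδ'] at this; linear_combination this
    refine Or.inl ⟨A.1 1 1, hsq, ?_⟩
    have ht2v : (t2 : L) = 1 := by
      rw [← hb, hβ, hγ]; rw [hαδ']; linear_combination hsq
    have ht3v : (t3 : L) = A.1 1 1 := by rw [← hd3, hγ, add_zero, hαδ']
    refine Prod.ext ?_ (Prod.ext ?_ (Prod.ext ?_ ?_)) <;>
      simp only [hψ]
    · funext i j
      fin_cases i <;> fin_cases j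
      · exact hαδ'.symm
      · exact hβ.symm
      · exact hγ.symm
      · rfl
    · exact ht1v.symm
    · exact ht2v.symm
    · exact ht3v.symm

/-
STATEMENT 19 (Corollary 6.4): for every prime p and L an algebraic closure of 𝔽_p, the
vector v = (XY, X+Y, 1, 1) ∈ V₈ (coordinates (a,…,g) = (0,1,0,1,1,1,1)) satisfies
Δ₈(v) = 1 and is stable for the action of G₈ = SL₂(L) × Lˣ × Lˣ × Lˣ; in particular
there exist stable vectors in V₈ with all coordinates in the prime subfield 𝔽_p.
-/
theorem stable8_exists_over_prime_field
    (p : ℕ) (hp : p.Prime)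
    {L : Type*} [Field L] [IsAlgClosed L] [CharP L p] :
    Delta8 (![0, 1, 0, 1, 1, 1, 1] : Fin 7 → L) = 1 ∧
    Stable8 (![0, 1, 0, 1, 1, 1, 1] : Fin 7 → L) ∧
    ∃ c : Fin 7 → L, (∀ i, ∃ z : ℤ, c i = (z : L)) ∧ Stable8 c := by
  have hst : Stable8 (![0, 1, 0, 1, 1, 1, 1] : Fin 7 → L) := by
    constructor
    · -- Zariski closedness of the orbit
      refine ⟨{(MvPolynomial.X 5)^2 * (MvPolynomial.X 6)
        * ((MvPolynomial.X 1)^2 - MvPolynomial.C 4 * (MvPolynomial.X 0) * (MvPolynomial.X 2))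
        * ((MvPolynomial.X 2)*(MvPolynomial.X 3)^2 - (MvPolynomial.X 1)*(MvPolynomial.X 3)*(MvPolynomial.X 4)
            + (MvPolynomial.X 0)*(MvPolynomial.X 4)^2) + 1}, ?_⟩
      ext x
      simp only [Set.mem_setOf_eq, Set.mem_singleton_iff, forall_eq]
      constructor
      · intro hx
        have := orbit_fwd hx
        simp only [map_add, map_mul, map_pow, map_sub, map_one, MvPolynomial.eval_C,
          MvPolynomial.eval_X]
        linear_combination this
      · intro hx
        apply orbit_bwd
        simp only [map_add, map_mul, map_pow, map_sub, map_one, MvPolynomial.eval_C,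
          MvPolynomial.eval_X] at hx
        linear_combination hx
    · exact stab_finite
  refine ⟨?_, hst, ![0, 1, 0, 1, 1, 1, 1], ?_, hst⟩
  · show ((1:L)^2 * 1 * ((1:L)^2 - 4*0*0) * (0*(1:L)^2 - 1*1*1 + 0*(1:L)^2))^2 = 1
    norm_num
  · intro i
    fin_cases i <;> first
      | exact ⟨0, by push_cast; rfl⟩
      | exact ⟨1, by push_cast; rfl⟩
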